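/- Let T be a rooted bifurcating tree with n = κ(T) leaves. Then C(T) = c(n) if and only if T is locally minimal, i.e., if and only if for every internal node of T, with subtrees T₁ and T₂ rooted at its two children, one has c(κ(T₁)) + c(κ(T₂)) + |κ(T₁) − κ(T₂)| = c(κ(T₁) + κ(T₂)). (Formally, 'locally minimal' is the recursive predicate: a leaf is locally minimal, and T₁ ⋆ T₂ is locally minimal if and only if T₁ and T₂ are locally minimal and c(κ(T₁)) + c(κ(T₂)) + |κ(T₁) − κ(T₂)| = c(κ(T₁) + κ(T₂)).) -/
import Mathlib


/-- The Colless index of the maximally balanced bifurcating tree with `n` leaves: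
`c 1 = 0` and `c n = c ⌈n/2⌉ + c ⌊n/2⌋ + (⌈n/2⌉ - ⌊n/2⌋)` for `n ≥ 2`. -/
def c : ℕ → ℕ
  | 0 => 0
  | 1 => 0
  | n + 2 => c ((n + 3) / 2) + c ((n + 2) / 2) + ((n + 3) / 2 - (n + 2) / 2)
decreasing_by all_goals omega

/-- Rooted bifurcating trees: full binary trees built from single-node leaves by
the root join operation. -/
inductive BTree : Type
  | leaf : BTree
  | node : BTree → BTree → BTree
deriving DecidableEq

/-- The number of leaves of a rooted bifurcating tree. -/
def kappa : BTree → ℕ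
  | .leaf => 1
  | .node t₁ t₂ => kappa t₁ + kappa t₂

/-- The Colless index of a rooted bifurcating tree:
`C(leaf) = 0` and `C(T₁ ⋆ T₂) = C(T₁) + C(T₂) + |κ(T₁) - κ(T₂)|`. -/
def colless : BTree → ℕ
  | .leaf => 0
  | .node t₁ t₂ => colless t₁ + colless t₂ + Nat.dist (kappa t₁) (kappa t₂)

/-- A tree is locally minimal when it is a leaf, or it is a root join `T₁ ⋆ T₂` of
two locally minimal trees with
`c (κ T₁) + c (κ T₂) + |κ T₁ - κ T₂| = c (κ T₁ + κ T₂)`. -/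
def LocallyMinimal : BTree → Prop
  | .leaf => True
  | .node t₁ t₂ => LocallyMinimal t₁ ∧ LocallyMinimal t₂ ∧
      c (kappa t₁) + c (kappa t₂) + Nat.dist (kappa t₁) (kappa t₂) = c (kappa t₁ + kappa t₂)

lemma c_two_step (m : ℕ) (h : 2 ≤ m) :
    c m = c ((m+1)/2) + c (m/2) + (m % 2) := by
  obtain ⟨n, rfl⟩ : ∃ n, m = n + 2 := ⟨m - 2, by omega⟩
  rw [c]
  have h1 : (n+3)/2 = (n+2+1)/2 := by omega
  have h2 : (n+3)/2 - (n+2)/2 = (n+2) % 2 := by omega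
  rw [h1, h2]

lemma c_double (x : ℕ) (hx : 1 ≤ x) : c (2*x) = 2 * c x := by
  rw [c_two_step (2*x) (by omega)]
  have h1 : (2*x+1)/2 = x := by omega
  have h2 : (2*x)/2 = x := by omega
  have h3 : (2*x) % 2 = 0 := by omega
  rw [h1, h2, h3]; omega

lemma c_odd (x : ℕ) (hx : 1 ≤ x) : c (2*x+1) = c (x+1) + c x + 1 := by
  rw [c_two_step (2*x+1) (by omega)]
  have h1 : (2*x+1+1)/2 = x+1 := by omega
  have h2 : (2*x+1)/2 = x := by omega
  have h3 : (2*x+1) % 2 = 1 := by omega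
  rw [h1, h2, h3]

lemma c_min_le : ∀ n a b, a + b = n → 1 ≤ a → 1 ≤ b → b ≤ a →
    c n ≤ c a + c b + (a - b) := by
  intro n
  induction n using Nat.strong_induction_on with
  | _ n ih =>
  intro a b hab ha hb hba
  rcases Nat.lt_or_ge a 3 with ha3 | ha3
  · -- a ∈ {1,2}
    interval_cases a <;> interval_cases b <;> subst hab <;> simp [c]
  · rcases Nat.eq_or_lt_of_le hb with hb1 | hb2
    · -- b = 1
      obtain rfl : b = 1 := hb1.symm
      rcases Nat.even_or_odd a with ⟨x, hx⟩ | ⟨x, hx⟩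
      · -- a = 2x, x ≥ 2, n = 2x+1
        obtain rfl : a = 2*x := by omega
        have hx2 : 2 ≤ x := by omega
        have hn : n = 2*x+1 := by omega
        rw [hn, c_odd x (by omega), c_double x (by omega)]
        have := ih (x+1) (by omega) x 1 rfl (by omega) le_rfl (by omega)
        simp [c] at this ⊢
        omega
      · -- a = 2x+1, x ≥ 1, n = 2x+2
        obtain rfl : a = 2*x+1 := by omega
        have hn : n = 2*(x+1) := by omega
        rw [hn, c_double (x+1) (by omega), c_odd x (by omega)]
        have := ih (x+1) (by omega) x 1 rfl (by omega) le_rfl (by omega)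
        simp [c] at this ⊢
        omega
    · -- a ≥ 3, b ≥ 2
      rcases Nat.even_or_odd a with ⟨x, hxa⟩ | ⟨x, hxa⟩ <;>
        rcases Nat.even_or_odd b with ⟨y, hyb⟩ | ⟨y, hyb⟩
      · -- both even
        obtain rfl : a = 2*x := by omega
        obtain rfl : b = 2*y := by omega
        have hn : n = 2*(x+y) := by omega
        rw [hn, c_double (x+y) (by omega), c_double x (by omega),
          c_double y (by omega)]
        have := ih (x+y) (by omega) x y rfl (by omega) (by omega) (by omega)
        omega
      · -- a even, b odd
        obtain rfl : a = 2*x := by omega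
        obtain rfl : b = 2*y+1 := by omega
        have hx : 1 ≤ x := by omega
        have hy : 1 ≤ y := by omega
        have hxy : y + 1 ≤ x := by omega
        have hn : n = 2*(x+y)+1 := by omega
        rw [hn, c_odd (x+y) (by omega), c_double x (by omega),
          c_odd y (by omega)]
        have h1 := ih (x+y+1) (by omega) x (y+1) rfl (by omega) (by omega) (by omega)
        have h2 := ih (x+y) (by omega) x y rfl (by omega) (by omega) (by omega)
        omega
      · -- a odd, b even
        obtain rfl : a = 2*x+1 := by omega
        obtain rfl : b = 2*y := by omega
        have hx : 1 ≤ x := by omega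
        have hy : 1 ≤ y := by omega
        have hxy : y ≤ x := by omega
        have hn : n = 2*(x+y)+1 := by omega
        rw [hn, c_odd (x+y) (by omega), c_odd x (by omega),
          c_double y (by omega)]
        have h1 := ih (x+y+1) (by omega) (x+1) y (by omega) (by omega) (by omega) (by omega)
        have h2 := ih (x+y) (by omega) x y rfl (by omega) (by omega) (by omega)
        omega
      · -- both odd
        obtain rfl : a = 2*x+1 := by omega
        obtain rfl : b = 2*y+1 := by omega
        have hx : 1 ≤ x := by omega
        have hy : 1 ≤ y := by omega
        have hxy : y ≤ x := by omega
        have hn : n = 2*(x+y+1) := by omega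
        rw [hn, c_double (x+y+1) (by omega), c_odd x (by omega),
          c_odd y (by omega)]
        have h1 := ih (x+y+1) (by omega) (x+1) y (by omega) (by omega) (by omega) (by omega)
        rcases Nat.eq_or_lt_of_le hxy with h | h
        · subst h; omega
        · have h2 := ih (x+y+1) (by omega) x (y+1) (by omega) (by omega) (by omega) (by omega)
          omega

lemma c_min_le' (a b : ℕ) (ha : 1 ≤ a) (hb : 1 ≤ b) :
    c (a + b) ≤ c a + c b + Nat.dist a b := by
  rcases Nat.le_total b a with h | h
  · have := c_min_le (a+b) a b rfl ha hb h
    unfold Nat.dist; omega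
  · have := c_min_le (a+b) b a (by omega) hb ha h
    unfold Nat.dist; omega

lemma kappa_pos (t : BTree) : 1 ≤ kappa t := by
  induction t with
  | leaf => simp [kappa]
  | node t₁ t₂ h₁ h₂ => simp [kappa]; omega

lemma c_le_colless (t : BTree) : c (kappa t) ≤ colless t := by
  induction t with
  | leaf => simp [kappa, colless, c]
  | node t₁ t₂ h₁ h₂ =>
    have := c_min_le' (kappa t₁) (kappa t₂) (kappa_pos t₁) (kappa_pos t₂)
    simp only [kappa, colless]
    omega

/-- A rooted bifurcating tree has minimum Colless index `c (κ T)` if and only if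
it is locally minimal. -/
theorem colless_eq_c_iff_locallyMinimal (T : BTree) :
    colless T = c (kappa T) ↔ LocallyMinimal T := by
  induction T with
  | leaf => simp [colless, kappa, c, LocallyMinimal]
  | node t₁ t₂ h₁ h₂ =>
    have l₁ := c_le_colless t₁
    have l₂ := c_le_colless t₂
    have hm := c_min_le' (kappa t₁) (kappa t₂) (kappa_pos t₁) (kappa_pos t₂)
    simp only [colless, kappa, LocallyMinimal, ← h₁, ← h₂]
    omega
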